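/- arXiv:1610.03328 — 4 statements merged into one kernel-verified Lean document; each statement's English description precedes it below -/
import Mathlib

section
/- For every real number y with 0 < y < 1, every integer n ≥ 1, and every real α with 0 < α < 1, one has ∑_{i=0}^∞ y^i * C(⌊iα⌋ + n - 1, n - 1) ≥ y^{1/α} / (1 - y^{1/α})^n, where C denotes the binomial coefficient and ⌊·⌋ the floor function. -/
/-!
Put `x = y ^ (1 / α)`, so that `x / (1 - x) ^ n = ∑ₖ xᵏ⁺¹ C(k + n - 1, n - 1)` by the negative
binomial series. The index `i = ⌈k / α⌉` satisfies `k ≤ i α < k + 1`, hence `⌊i α⌋ = k` and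
`y ^ i ≥ y ^ ((k + 1) / α) = xᵏ⁺¹`; since `k ↦ ⌈k / α⌉` is injective, the series for
`x / (1 - x) ^ n` is dominated termwise by a subseries of the nonnegative series on the right.
-/

open Real

theorem hasSum_pow_succ_mul_choose {𝕜 : Type*} [NormedField 𝕜] {x : 𝕜} (hx : ‖x‖ < 1)
    (m : ℕ) :
    HasSum (fun k : ℕ => x ^ (k + 1) * ((k + m).choose m : 𝕜)) (x / (1 - x) ^ (m + 1)) := by
  have hterm : (fun k : ℕ => x ^ (k + 1) * ((k + m).choose m : 𝕜)) =
      fun k => x * (((k + m).choose m : 𝕜) * x ^ k) := by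
    funext k
    ring
  rw [hterm, ← mul_one_div]
  exact (hasSum_choose_mul_geometric_of_norm_lt_one m hx).mul_left x

theorem summable_pow_mul_choose_floor_mul {y α : ℝ} (hy : 0 ≤ y) (hy1 : y < 1) (hα1 : α ≤ 1)
    (m : ℕ) : Summable fun i : ℕ => y ^ i * ((⌊(i : ℝ) * α⌋₊ + m).choose m : ℝ) := by
  refine (summable_choose_mul_geometric_of_norm_lt_one m
    (by rwa [Real.norm_of_nonneg hy])).of_nonneg_of_le (fun i => by positivity) fun i => ?_
  have hfloor : ⌊(i : ℝ) * α⌋₊ ≤ i :=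
    Nat.floor_le_of_le (mul_le_of_le_one_right i.cast_nonneg hα1)
  rw [mul_comm]
  gcongr

theorem ceil_div_mul_mem_Ico {α : ℝ} (hα : 0 < α) (hα1 : α ≤ 1) (k : ℕ) :
    (⌈k / α⌉₊ : ℝ) * α ∈ Set.Ico (k : ℝ) (k + 1) := by
  have hceil := Nat.ceil_lt_add_one (div_nonneg k.cast_nonneg hα.le)
  constructor
  · exact (div_le_iff₀ hα).mp (Nat.le_ceil _)
  · calc (⌈k / α⌉₊ : ℝ) * α < (k / α + 1) * α := by gcongr
      _ = k + α := by field_simp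
      _ ≤ k + 1 := by linarith

theorem floor_ceil_div_mul {α : ℝ} (hα : 0 < α) (hα1 : α ≤ 1) (k : ℕ) :
    ⌊(⌈k / α⌉₊ : ℝ) * α⌋₊ = k :=
  (Nat.floor_eq_iff (by positivity)).mpr (ceil_div_mul_mem_Ico hα hα1 k)

theorem rpow_one_div_pow_succ_le_pow_ceil_div {α : ℝ} (hα : 0 < α) (hα1 : α ≤ 1) (k : ℕ) {y : ℝ}
    (hy : 0 < y) (hy1 : y ≤ 1) :
    (y ^ (1 / α)) ^ (k + 1) ≤ y ^ ⌈k / α⌉₊ := by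
  have hceil : (⌈k / α⌉₊ : ℝ) ≤ (k + 1) / α :=
    (le_div_iff₀ hα).mpr (ceil_div_mul_mem_Ico hα hα1 k).2.le
  rw [← rpow_natCast, ← rpow_natCast, ← rpow_mul hy.le]
  refine rpow_le_rpow_of_exponent_ge hy hy1 ?_
  push_cast
  rwa [one_div_mul_eq_div]

theorem stmt0 (y α : ℝ) (hy : 0 < y) (hy1 : y < 1) (hα : 0 < α) (hα1 : α < 1)
    (n : ℕ) (hn : 1 ≤ n) :
    y ^ (1 / α) / (1 - y ^ (1 / α)) ^ n ≤
      ∑' i : ℕ, y ^ i * ((⌊(i : ℝ) * α⌋₊ + n - 1).choose (n - 1) : ℝ) := by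
  obtain ⟨m, rfl⟩ : ∃ m, n = m + 1 := ⟨n - 1, by omega⟩
  simp only [← add_assoc, Nat.add_sub_cancel]
  have hx : ‖y ^ (1 / α)‖ < 1 := by
    rw [Real.norm_of_nonneg (by positivity)]
    exact rpow_lt_one hy.le hy1 (by positivity)
  rw [← (hasSum_pow_succ_mul_choose hx m).tsum_eq]
  refine Summable.tsum_le_tsum_of_inj (fun k : ℕ => ⌈k / α⌉₊)
    (Function.LeftInverse.injective (g := fun i : ℕ => ⌊(i : ℝ) * α⌋₊)
      (floor_ceil_div_mul hα hα1.le))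
    (fun i _ => by positivity) (fun k => ?_) (hasSum_pow_succ_mul_choose hx m).summable
    (summable_pow_mul_choose_floor_mul hy.le hy1 hα1.le m)
  rw [floor_ceil_div_mul hα hα1.le]
  gcongr
  exact rpow_one_div_pow_succ_le_pow_ceil_div hα hα1.le k hy hy1.le
end

section
/- For every real number y with 0 < y < 1, every integer n ≥ 1, and every real α with 0 < α < 1, one has ∑_{i=0}^∞ y^i * C(⌊iα⌋ + n, n - 1) ≤ (n/α) * (1 - y^{1/α})^{-n}. -/
open Real

/-- Geometric tail sum in `ℝ≥0∞`. -/
lemma tail_geom (W : ENNReal) (i0 : ℕ) :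
    ∑' i : ℕ, (if i0 ≤ i then W ^ i else 0) = W ^ i0 * (1 - W)⁻¹ := by
  have hinj : Function.Injective (fun d : ℕ => i0 + d) := fun a b h => by
    simpa using h
  have h1 : ∑' d : ℕ, (if i0 ≤ i0 + d then W ^ (i0 + d) else (0 : ENNReal))
      = ∑' i : ℕ, (if i0 ≤ i then W ^ i else 0) := by
    apply hinj.tsum_eq (f := fun i : ℕ => if i0 ≤ i then W ^ i else 0)
    intro x hx
    rcases le_or_gt i0 x with h | h
    · exact ⟨x - i0, by show i0 + (x - i0) = x; omega⟩
    · exact absurd (if_neg (by omega)) hx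
  rw [← h1]
  have h2 : ∀ d : ℕ, (if i0 ≤ i0 + d then W ^ (i0 + d) else (0 : ENNReal))
      = W ^ i0 * W ^ d := by
    intro d
    rw [if_pos (Nat.le_add_right _ _), pow_add]
  simp_rw [h2]
  rw [ENNReal.tsum_mul_left, ENNReal.tsum_geometric]

/-- Hockey stick identity. -/
lemma hockey (l k : ℕ) :
    (k + l + 1).choose (l + 1) = ∑ a ∈ Finset.range (k + 1), (a + l).choose l := by
  induction k with
  | zero => simp
  | succ k ih =>
    rw [Finset.sum_range_succ, ← ih, show k + 1 + l + 1 = (k + l + 1) + 1 by omega,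
      Nat.choose_succ_succ, show k + 1 + l = k + l + 1 by omega]
    simp only [Nat.succ_eq_add_one]
    omega

/-- Ratio bound for binomial coefficients. -/
lemma ratio (k m : ℕ) : (k + m + 1).choose m ≤ (m + 1) * (k + m).choose m := by
  have h1 : (k + m + 1) * (k + m).choose k = (k + m + 1).choose (k + 1) * (k + 1) :=
    Nat.add_one_mul_choose_eq (k + m) k
  have h2 : (k + m).choose k = (k + m).choose m := by
    have := Nat.choose_symm (Nat.le_add_right k m)
    simpa using this.symm
  have h3 : (k + m + 1).choose m = (k + m + 1).choose (k + 1) := by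
    have := Nat.choose_symm (show k + 1 ≤ k + m + 1 by omega)
    simpa [show k + m + 1 - (k + 1) = m by omega] using this
  have h4 : (k + m + 1).choose m * (k + 1) = (k + m + 1) * (k + m).choose m := by
    rw [h3, ← h1, h2]
  have h5 : (k + m + 1) * (k + m).choose m ≤ ((m + 1) * (k + m).choose m) * (k + 1) := by
    have : (k + m + 1) ≤ (m + 1) * (k + 1) := by nlinarith
    calc (k + m + 1) * (k + m).choose m ≤ ((m + 1) * (k + 1)) * (k + m).choose m :=
          Nat.mul_le_mul_right _ this
      _ = ((m + 1) * (k + m).choose m) * (k + 1) := by ring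
  have h6 : (k + m + 1).choose m * (k + 1) ≤ ((m + 1) * (k + m).choose m) * (k + 1) := by
    rw [h4]; exact h5
  exact Nat.le_of_mul_le_mul_right h6 (Nat.succ_pos k)

/-- Finset sum to tsum with indicator, specialized. -/
lemma sum_to_tsum (c : ℕ → ENNReal) (K : ℕ) :
    ∑ a ∈ Finset.range (K + 1), c a = ∑' a : ℕ, (if a ≤ K then c a else 0) := by
  rw [tsum_eq_sum (s := Finset.range (K + 1))]
  · apply Finset.sum_congr rfl
    intro a ha
    rw [if_pos (Nat.lt_succ_iff.mp (Finset.mem_range.mp ha))]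
  · intro b hb
    rw [if_neg]
    intro h
    exact hb (Finset.mem_range.mpr (Nat.lt_succ_of_le h))

/-- Main summation bound, by induction on `m`. -/
lemma mixed : ∀ (m : ℕ) (Y Z : ENNReal) (k : ℕ → ℕ),
    (∀ a : ℕ, ∑' i : ℕ, (if a ≤ k i then Y ^ i else 0) ≤ Z ^ a * (1 - Y)⁻¹) →
    ∑' i : ℕ, Y ^ i * ((k i + m).choose m : ENNReal) ≤ (1 - Y)⁻¹ * ((1 - Z)⁻¹) ^ m := by
  intro m
  induction m with
  | zero =>
    intro Y Z k _
    simp only [Nat.add_zero, Nat.choose_zero_right, Nat.cast_one, mul_one, pow_zero]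
    rw [ENNReal.tsum_geometric]
  | succ l ih =>
    intro Y Z k htail
    have step1 : ∀ i : ℕ, Y ^ i * ((k i + (l + 1)).choose (l + 1) : ENNReal)
        = ∑' a : ℕ, (if a ≤ k i then ((a + l).choose l : ENNReal) * Y ^ i else 0) := by
      intro i
      have hh : ((k i + (l + 1)).choose (l + 1) : ENNReal)
          = ∑ a ∈ Finset.range (k i + 1), ((a + l).choose l : ENNReal) := by
        have := hockey l (k i)
        have harr : k i + (l + 1) = k i + l + 1 := by omega
        rw [harr, this]
        push_cast
        rfl
      rw [hh, sum_to_tsum, ← ENNReal.tsum_mul_left]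
      apply tsum_congr
      intro a
      by_cases hc : a ≤ k i
      · simp [hc, mul_comm]
      · simp [hc]
    calc ∑' i : ℕ, Y ^ i * ((k i + (l + 1)).choose (l + 1) : ENNReal)
        = ∑' i : ℕ, ∑' a : ℕ, (if a ≤ k i then ((a + l).choose l : ENNReal) * Y ^ i else 0) := by
          exact tsum_congr step1
      _ = ∑' a : ℕ, ∑' i : ℕ, (if a ≤ k i then ((a + l).choose l : ENNReal) * Y ^ i else 0) :=
          ENNReal.tsum_comm
      _ = ∑' a : ℕ, ((a + l).choose l : ENNReal) * ∑' i : ℕ, (if a ≤ k i then Y ^ i else 0) := by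
          apply tsum_congr
          intro a
          rw [← ENNReal.tsum_mul_left]
          apply tsum_congr
          intro i
          by_cases hc : a ≤ k i <;> simp [hc]
      _ ≤ ∑' a : ℕ, ((a + l).choose l : ENNReal) * (Z ^ a * (1 - Y)⁻¹) := by
          apply ENNReal.tsum_le_tsum
          intro a
          exact mul_le_mul_right (htail a) _
      _ = (1 - Y)⁻¹ * ∑' a : ℕ, Z ^ a * ((a + l).choose l : ENNReal) := by
          rw [← ENNReal.tsum_mul_left]
          apply tsum_congr
          intro a
          ring
      _ ≤ (1 - Y)⁻¹ * ((1 - Z)⁻¹ * ((1 - Z)⁻¹) ^ l) := by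
          apply mul_le_mul_right
          have htail' : ∀ a : ℕ, ∑' i : ℕ, (if a ≤ (id i : ℕ) then Z ^ i else 0)
              ≤ Z ^ a * (1 - Z)⁻¹ := by
            intro a
            rw [show (fun i : ℕ => if a ≤ (id i : ℕ) then Z ^ i else 0)
              = (fun i : ℕ => if a ≤ i then Z ^ i else 0) by rfl]
            exact le_of_eq (tail_geom Z a)
          exact ih Z Z id htail'
      _ = (1 - Y)⁻¹ * ((1 - Z)⁻¹) ^ (l + 1) := by
          rw [pow_succ]
          ring

theorem stmt1 (y α : ℝ) (hy : 0 < y) (hy1 : y < 1) (hα : 0 < α) (hα1 : α < 1)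
    (n : ℕ) (hn : 1 ≤ n) :
    ∑' i : ℕ, y ^ i * ((⌊(i : ℝ) * α⌋₊ + n).choose (n - 1) : ℝ) ≤
      ((n : ℝ) / α) * ((1 - y ^ (1 / α)) ^ n)⁻¹ := by
  obtain ⟨m, rfl⟩ : ∃ m, n = m + 1 := ⟨n - 1, by omega⟩
  set z : ℝ := y ^ (1 / α) with hz_def
  have hz : 0 < z := Real.rpow_pos_of_pos hy _
  have hz1 : z < 1 := Real.rpow_lt_one hy.le hy1 (by positivity)
  -- Bernoulli
  have hbern : α * (1 - z) ≤ 1 - y := by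
    have hp : (1 : ℝ) ≤ 1 / α := by
      rw [le_div_iff₀ hα]; linarith
    have hs : (-1 : ℝ) ≤ y - 1 := by linarith
    have h := one_add_mul_self_le_rpow_one_add hs hp
    have h1 : (1 : ℝ) + (y - 1) = y := by ring
    rw [h1] at h
    -- h : 1 + (1/α) * (y - 1) ≤ y ^ (1/α) = z
    have hz_ge : 1 + (1 / α) * (y - 1) ≤ z := h
    have hmul := mul_le_mul_of_nonneg_left hz_ge hα.le
    have h2 : α * (1 + 1 / α * (y - 1)) = α + (y - 1) := by field_simp
    linarith [hmul, h2]
  set Y : ENNReal := ENNReal.ofReal y with hY_def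
  set Z : ENNReal := ENNReal.ofReal z with hZ_def
  set k : ℕ → ℕ := fun i => ⌊(i : ℝ) * α⌋₊ with hk_def
  set F : ℕ → ℝ := fun i => y ^ i * ((k i + (m + 1)).choose (m + 1 - 1) : ℝ) with hF_def
  have hFnn : ∀ i, 0 ≤ F i := by
    intro i
    apply mul_nonneg (pow_nonneg hy.le _) (Nat.cast_nonneg _)
  have h1Y : (1 : ENNReal) - Y = ENNReal.ofReal (1 - y) := by
    rw [ENNReal.ofReal_sub _ hy.le, ENNReal.ofReal_one]
  have h1Z : (1 : ENNReal) - Z = ENNReal.ofReal (1 - z) := by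
    rw [ENNReal.ofReal_sub _ hz.le, ENNReal.ofReal_one]
  have h1Yinv : (1 - Y)⁻¹ = ENNReal.ofReal ((1 - y)⁻¹) := by
    rw [h1Y, ENNReal.ofReal_inv_of_pos (by linarith)]
  have h1Zinv : (1 - Z)⁻¹ = ENNReal.ofReal ((1 - z)⁻¹) := by
    rw [h1Z, ENNReal.ofReal_inv_of_pos (by linarith)]
  -- the tail hypothesis
  have htail : ∀ a : ℕ, ∑' i : ℕ, (if a ≤ k i then Y ^ i else 0) ≤ Z ^ a * (1 - Y)⁻¹ := by
    intro a
    set i0 : ℕ := ⌈(a : ℝ) / α⌉₊ with hi0_def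
    have himp : ∀ i : ℕ, a ≤ k i → i0 ≤ i := by
      intro i hai
      have h1 : (a : ℝ) ≤ (i : ℝ) * α := by
        have := (Nat.le_floor_iff (by positivity)).mp hai
        exact this
      have h2 : (a : ℝ) / α ≤ (i : ℝ) := by
        rw [div_le_iff₀ hα]
        exact h1
      exact Nat.ceil_le.mpr h2
    have hYZ : Y ^ i0 ≤ Z ^ a := by
      have hreal : y ^ i0 ≤ z ^ a := by
        have h1 : (a : ℝ) ≤ α * (i0 : ℝ) := by
          have := Nat.le_ceil ((a : ℝ) / α)
          calc (a : ℝ) = α * ((a : ℝ) / α) := by field_simp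
            _ ≤ α * (i0 : ℝ) := mul_le_mul_of_nonneg_left this hα.le
        have h2 : z ^ (α * (i0 : ℝ)) ≤ z ^ ((a : ℝ) : ℝ) :=
          Real.rpow_le_rpow_of_exponent_ge hz hz1.le h1
        have h3 : z ^ (α * (i0 : ℝ)) = y ^ i0 := by
          rw [hz_def, ← Real.rpow_natCast y i0, ← Real.rpow_mul hy.le]
          congr 1
          field_simp
        have h4 : z ^ ((a : ℝ) : ℝ) = z ^ a := Real.rpow_natCast z a
        rw [h3, h4] at h2
        exact h2
      calc Y ^ i0 = ENNReal.ofReal (y ^ i0) := by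
            rw [ENNReal.ofReal_pow hy.le]
        _ ≤ ENNReal.ofReal (z ^ a) := ENNReal.ofReal_le_ofReal hreal
        _ = Z ^ a := ENNReal.ofReal_pow hz.le a
    calc ∑' i : ℕ, (if a ≤ k i then Y ^ i else 0)
        ≤ ∑' i : ℕ, (if i0 ≤ i then Y ^ i else 0) := by
          apply ENNReal.tsum_le_tsum
          intro i
          by_cases hc : a ≤ k i
          · rw [if_pos hc, if_pos (himp i hc)]
          · rw [if_neg hc]; exact zero_le
      _ = Y ^ i0 * (1 - Y)⁻¹ := tail_geom Y i0
      _ ≤ Z ^ a * (1 - Y)⁻¹ := mul_le_mul_left hYZ _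
  -- ENNReal chain
  have key : ∑' i : ℕ, ENNReal.ofReal (F i)
      ≤ ENNReal.ofReal (((m + 1 : ℕ) : ℝ) / α * ((1 - z) ^ (m + 1))⁻¹) := by
    have hA : ∀ i : ℕ, ENNReal.ofReal (F i)
        ≤ ((m + 1 : ℕ) : ENNReal) * (Y ^ i * ((k i + m).choose m : ENNReal)) := by
      intro i
      have hcast : ENNReal.ofReal (F i)
          = Y ^ i * ((k i + (m + 1)).choose (m + 1 - 1) : ENNReal) := by
        rw [hF_def]
        rw [ENNReal.ofReal_mul (pow_nonneg hy.le _), ENNReal.ofReal_pow hy.le,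
          ENNReal.ofReal_natCast]
      rw [hcast]
      have hch : ((k i + (m + 1)).choose (m + 1 - 1) : ENNReal)
          ≤ ((m + 1 : ℕ) : ENNReal) * ((k i + m).choose m : ENNReal) := by
        have hnat : (k i + (m + 1)).choose (m + 1 - 1) ≤ (m + 1) * (k i + m).choose m := by
          have := ratio (k i) m
          have harr : k i + (m + 1) = k i + m + 1 := by omega
          rw [harr]
          simpa using this
        calc ((k i + (m + 1)).choose (m + 1 - 1) : ENNReal)
            ≤ (((m + 1) * (k i + m).choose m : ℕ) : ENNReal) := Nat.cast_le.mpr hnat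
          _ = ((m + 1 : ℕ) : ENNReal) * ((k i + m).choose m : ENNReal) := by push_cast; rfl
      calc Y ^ i * ((k i + (m + 1)).choose (m + 1 - 1) : ENNReal)
          ≤ Y ^ i * (((m + 1 : ℕ) : ENNReal) * ((k i + m).choose m : ENNReal)) :=
            mul_le_mul_right hch _
        _ = ((m + 1 : ℕ) : ENNReal) * (Y ^ i * ((k i + m).choose m : ENNReal)) := by ring
    calc ∑' i : ℕ, ENNReal.ofReal (F i)
        ≤ ∑' i : ℕ, ((m + 1 : ℕ) : ENNReal) * (Y ^ i * ((k i + m).choose m : ENNReal)) :=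
          ENNReal.tsum_le_tsum hA
      _ = ((m + 1 : ℕ) : ENNReal) * ∑' i : ℕ, Y ^ i * ((k i + m).choose m : ENNReal) :=
          ENNReal.tsum_mul_left
      _ ≤ ((m + 1 : ℕ) : ENNReal) * ((1 - Y)⁻¹ * ((1 - Z)⁻¹) ^ m) :=
          mul_le_mul_right (mixed m Y Z k htail) _
      _ = ENNReal.ofReal (((m + 1 : ℕ) : ℝ) * ((1 - y)⁻¹ * ((1 - z)⁻¹) ^ m)) := by
          have hzpos : (0 : ℝ) < 1 - z := by linarith
          have hypos : (0 : ℝ) < 1 - y := by linarith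
          rw [h1Yinv, h1Zinv, ← ENNReal.ofReal_pow (inv_nonneg.mpr hzpos.le),
            ← ENNReal.ofReal_mul (inv_nonneg.mpr hypos.le), ← ENNReal.ofReal_natCast (m + 1),
            ← ENNReal.ofReal_mul (Nat.cast_nonneg _)]
      _ ≤ ENNReal.ofReal (((m + 1 : ℕ) : ℝ) / α * ((1 - z) ^ (m + 1))⁻¹) := by
          apply ENNReal.ofReal_le_ofReal
          have hzpos : (0 : ℝ) < 1 - z := by linarith
          have hypos : (0 : ℝ) < 1 - y := by linarith
          have h1 : (1 - y)⁻¹ ≤ (α * (1 - z))⁻¹ := by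
            apply inv_anti₀ (by positivity) hbern
          have hP : (0 : ℝ) ≤ ((1 - z)⁻¹) ^ m := by positivity
          calc ((m + 1 : ℕ) : ℝ) * ((1 - y)⁻¹ * ((1 - z)⁻¹) ^ m)
              ≤ ((m + 1 : ℕ) : ℝ) * ((α * (1 - z))⁻¹ * ((1 - z)⁻¹) ^ m) := by
                apply mul_le_mul_of_nonneg_left _ (by positivity)
                exact mul_le_mul_of_nonneg_right h1 hP
            _ = ((m + 1 : ℕ) : ℝ) / α * ((1 - z) ^ (m + 1))⁻¹ := by
                rw [mul_inv, div_eq_mul_inv, ← inv_pow, pow_succ]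
                ring
  -- transfer back to ℝ
  have hR : (0 : ℝ) ≤ ((m + 1 : ℕ) : ℝ) / α * ((1 - z) ^ (m + 1))⁻¹ := by
    have hzpos : (0 : ℝ) < 1 - z := by linarith
    positivity
  have hgoal : ∑' i : ℕ, F i ≤ ((m + 1 : ℕ) : ℝ) / α * ((1 - z) ^ (m + 1))⁻¹ := by
    have hne : ∑' i : ℕ, ENNReal.ofReal (F i) ≠ ⊤ :=
      ne_top_of_le_ne_top ENNReal.ofReal_ne_top key
    have heq : ∑' i : ℕ, F i = (∑' i : ℕ, ENNReal.ofReal (F i)).toReal := by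
      rw [ENNReal.tsum_toReal_eq (fun i => ENNReal.ofReal_ne_top)]
      apply tsum_congr
      intro i
      rw [ENNReal.toReal_ofReal (hFnn i)]
    rw [heq]
    exact ENNReal.toReal_le_of_le_ofReal hR key
  exact hgoal
end

section
/- Fix x > 1 and define f(α) = (1-α) α^{α/(1-α)} x^{1/(1-α)} for α ∈ (0,1). Then f is strictly decreasing on (0, 1/x) and strictly increasing on (1/x, 1); in particular f attains its minimum on (0,1) at α = 1/x. -/
/-!
On `(0, 1)` the function is `exp` of
`log (1 - α) + α / (1 - α) * log α + log x / (1 - α)`, whose derivative simplifies to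
`(log α + log x) / (1 - α) ^ 2`. Its sign is that of `α - 1 / x`.
-/

open Real Set

noncomputable section

namespace PoissonDirichlet

def rateFun (x α : ℝ) : ℝ := (1 - α) * α ^ (α / (1 - α)) * x ^ (1 / (1 - α))

def logRateFun (x α : ℝ) : ℝ := log (1 - α) + α / (1 - α) * log α + 1 / (1 - α) * log x

variable {x : ℝ}

theorem rateFun_eq_exp_logRateFun (hx : 0 < x) {α : ℝ} (hα : α ∈ Ioo (0 : ℝ) 1) :
    rateFun x α = exp (logRateFun x α) := by
  have h1α : 0 < 1 - α := sub_pos.2 hα.2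
  rw [rateFun, logRateFun, exp_add, exp_add, exp_log h1α, mul_comm (α / (1 - α)),
    mul_comm (1 / (1 - α)), ← rpow_def_of_pos hα.1, ← rpow_def_of_pos hx]

theorem hasDerivAt_logRateFun {α : ℝ} (hα : α ∈ Ioo (0 : ℝ) 1) :
    HasDerivAt (logRateFun x) ((log α + log x) / (1 - α) ^ 2) α := by
  have hα0 : α ≠ 0 := hα.1.ne'
  have h1α : (1 : ℝ) - α ≠ 0 := (sub_pos.2 hα.2).ne'
  have hsub : HasDerivAt (fun a : ℝ => 1 - a) (-1) α := (hasDerivAt_id α).const_sub 1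
  have hlog1 := hsub.log h1α
  have hpow := ((hasDerivAt_id α).div hsub h1α).mul (hasDerivAt_log hα0)
  have hexp := ((hasDerivAt_const α (1 : ℝ)).div hsub h1α).mul_const (log x)
  refine ((hlog1.add hpow).add hexp).congr_deriv ?_
  simp only [Pi.div_apply, id]
  field_simp
  ring

theorem continuousOn_logRateFun : ContinuousOn (logRateFun x) (Ioo 0 1) :=
  fun _ hα => (hasDerivAt_logRateFun hα).continuousAt.continuousWithinAt

theorem strictAntiOn_logRateFun (hx : 1 < x) : StrictAntiOn (logRateFun x) (Ioc 0 (1 / x)) := by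
  have hsub : Ioc 0 (1 / x) ⊆ Ioo (0 : ℝ) 1 :=
    fun _ hα => ⟨hα.1, hα.2.trans_lt ((div_lt_one (by linarith)).2 hx)⟩
  refine strictAntiOn_of_deriv_neg (convex_Ioc _ _) (continuousOn_logRateFun.mono hsub) ?_
  intro α hα
  rw [interior_Ioc] at hα
  rw [(hasDerivAt_logRateFun (hsub (Ioo_subset_Ioc_self hα))).deriv]
  have hlog : log α < -log x := by simpa [log_inv] using log_lt_log hα.1 hα.2
  have h1α : 0 < 1 - α := sub_pos.2 (hsub (Ioo_subset_Ioc_self hα)).2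
  exact div_neg_of_neg_of_pos (by linarith) (by positivity)

theorem strictMonoOn_logRateFun (hx : 0 < x) : StrictMonoOn (logRateFun x) (Ico (1 / x) 1) := by
  have hsub : Ico (1 / x) 1 ⊆ Ioo (0 : ℝ) 1 :=
    fun _ hα => ⟨(one_div_pos.2 hx).trans_le hα.1, hα.2⟩
  refine strictMonoOn_of_deriv_pos (convex_Ico _ _) (continuousOn_logRateFun.mono hsub) ?_
  intro α hα
  rw [interior_Ico] at hα
  rw [(hasDerivAt_logRateFun (hsub (Ioo_subset_Ico_self hα))).deriv]
  have hlog : -log x < log α := by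
    simpa [log_inv] using log_lt_log (one_div_pos.2 hx) hα.1
  have h1α : 0 < 1 - α := sub_pos.2 hα.2
  exact div_pos (by linarith) (by positivity)

theorem strictAntiOn_rateFun (hx : 1 < x) : StrictAntiOn (rateFun x) (Ioc 0 (1 / x)) := by
  refine (exp_strictMono.comp_strictAntiOn (strictAntiOn_logRateFun hx)).congr fun α hα => ?_
  exact (rateFun_eq_exp_logRateFun (by linarith)
    ⟨hα.1, hα.2.trans_lt ((div_lt_one (by linarith)).2 hx)⟩).symm

theorem strictMonoOn_rateFun (hx : 0 < x) : StrictMonoOn (rateFun x) (Ico (1 / x) 1) := by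
  refine (exp_strictMono.comp_strictMonoOn (strictMonoOn_logRateFun hx)).congr fun α hα => ?_
  exact (rateFun_eq_exp_logRateFun hx ⟨(one_div_pos.2 hx).trans_le hα.1, hα.2⟩).symm

theorem rateFun_inv_le (hx : 1 < x) {α : ℝ} (hα : α ∈ Ioo (0 : ℝ) 1) :
    rateFun x (1 / x) ≤ rateFun x α := by
  have hinv : 0 < 1 / x := one_div_pos.2 (by linarith)
  rcases le_total α (1 / x) with hle | hge
  · exact (strictAntiOn_rateFun hx).antitoneOn ⟨hα.1, hle⟩ ⟨hinv, le_rfl⟩ hle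
  · exact (strictMonoOn_rateFun (by linarith)).monotoneOn
      ⟨le_rfl, (div_lt_one (by linarith)).2 hx⟩ ⟨hge, hα.2⟩ hge

end PoissonDirichlet

end

open PoissonDirichlet in
theorem stmt9 (x : ℝ) (hx : 1 < x) :
    StrictAntiOn (fun α : ℝ => (1 - α) * α ^ (α / (1 - α)) * x ^ (1 / (1 - α)))
        (Ioo (0 : ℝ) (1 / x)) ∧
      StrictMonoOn (fun α : ℝ => (1 - α) * α ^ (α / (1 - α)) * x ^ (1 / (1 - α)))
        (Ioo (1 / x) 1) ∧
      ∀ α ∈ Ioo (0 : ℝ) 1,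
        (1 - (1 / x)) * (1 / x) ^ ((1 / x) / (1 - 1 / x)) * x ^ (1 / (1 - 1 / x)) ≤
          (1 - α) * α ^ (α / (1 - α)) * x ^ (1 / (1 - α)) :=
  ⟨(strictAntiOn_rateFun hx).mono Ioo_subset_Ioc_self,
    (strictMonoOn_rateFun (by linarith)).mono Ioo_subset_Ico_self,
    fun _ hα => rateFun_inv_le hx hα⟩
end

section
/- Fix 0 < x ≤ 1. Then the function α ↦ (1-α) α^{α/(1-α)} x^{1/(1-α)} is decreasing on (0,1). -/
open Real Set

theorem stmt10 (x : ℝ) (hx0 : 0 < x) (hx1 : x ≤ 1) :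
    AntitoneOn (fun α : ℝ => (1 - α) * α ^ (α / (1 - α)) * x ^ (1 / (1 - α)))
      (Ioo (0 : ℝ) 1) := by
  set g : ℝ → ℝ := fun a => Real.log (1 - a) + (a * Real.log a + Real.log x) * (1 - a)⁻¹
    with hgdef
  have key : ∀ a ∈ Ioo (0:ℝ) 1,
      (1 - a) * a ^ (a / (1 - a)) * x ^ (1 / (1 - a)) = Real.exp (g a) := by
    intro a ⟨ha0, ha1⟩
    have hu : (0:ℝ) < 1 - a := by linarith
    have hga : g a = Real.log (1-a) + Real.log a * (a/(1-a)) + Real.log x * (1/(1-a)) := by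
      rw [hgdef]
      field_simp
      ring
    rw [Real.rpow_def_of_pos ha0, Real.rpow_def_of_pos hx0, hga, Real.exp_add, Real.exp_add,
      Real.exp_log hu]
  have hganti : AntitoneOn g (Ioo (0:ℝ) 1) := by
    have hderiv : ∀ a ∈ Ioo (0:ℝ) 1,
        HasDerivAt g ((Real.log a + Real.log x) / (1-a)^2) a := by
      intro a ⟨ha0, ha1⟩
      have hu : (0:ℝ) < 1 - a := by linarith
      have h1 : HasDerivAt (fun b : ℝ => 1 - b) (-1) a := by
        simpa using (hasDerivAt_id a).const_sub 1
      have hlog1 : HasDerivAt (fun b : ℝ => Real.log (1 - b)) ((1-a)⁻¹ * (-1)) a :=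
        (Real.hasDerivAt_log hu.ne').comp a h1
      have h2 : HasDerivAt (fun b : ℝ => b * Real.log b + Real.log x)
          (1 * Real.log a + a * a⁻¹) a :=
        ((hasDerivAt_id a).mul (Real.hasDerivAt_log ha0.ne')).add_const _
      have h3 : HasDerivAt (fun b : ℝ => (1 - b)⁻¹) (-(-1) / (1-a)^2) a := h1.inv hu.ne'
      have := hlog1.add (h2.mul h3)
      apply HasDerivAt.congr_deriv this
      field_simp
      ring
    apply antitoneOn_of_deriv_nonpos (convex_Ioo 0 1)
    · exact fun a ha => ((hderiv a ha).continuousAt.continuousWithinAt)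
    · intro a ha
      rw [interior_Ioo] at ha
      exact (hderiv a ha).differentiableAt.differentiableWithinAt
    · intro a ha
      rw [interior_Ioo] at ha
      rw [(hderiv a ha).deriv]
      obtain ⟨ha0, ha1⟩ := ha
      have hu : (0:ℝ) < 1 - a := by linarith
      have hL : Real.log a < 0 := Real.log_neg ha0 ha1
      have hX : Real.log x ≤ 0 := Real.log_nonpos hx0.le hx1
      exact le_of_lt (div_neg_of_neg_of_pos (by linarith) (by positivity))
  intro a ha b hb hab
  simp only
  rw [key a ha, key b hb]
  exact Real.exp_le_exp.mpr (hganti ha hb hab)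
end
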